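/- arXiv:2210.03096 — 5 statements merged into one kernel-verified Lean document; each statement's English description precedes it below -/
import Mathlib

section
/- Let (a_k)_{k≥2} be a sequence of positive reals, C₁ ≥ 0, and p ∈ (0, 1/3). If for every k ≥ 2 one has (k²/4)·a_k ≤ C₁ + (p/(1-p))·∑_{t=2}^{k-1} a_t, then for every k ≥ 2 one has a_k ≤ (4C₁/(1-3p))·(1/k²). -/
lemma aux_sum_6 : ∀ k : ℕ, 3 ≤ k →
    ∑ t ∈ Finset.Ico 3 k, (1:ℝ)/(t:ℝ)^2 ≤ 1/2 - 1/((k:ℝ)-1) := by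
  intro k hk
  induction k, hk using Nat.le_induction with
  | base => norm_num
  | succ n hn ih =>
    rw [Finset.sum_Ico_succ_top (by omega)]
    have hn3 : (3:ℝ) ≤ (n:ℝ) := by exact_mod_cast hn
    have h1 : (0:ℝ) < (n:ℝ) - 1 := by linarith
    have h0 : (0:ℝ) < (n:ℝ) := by linarith
    have hstep : (1:ℝ)/(n:ℝ)^2 ≤ 1/((n:ℝ)-1) - 1/(n:ℝ) := by
      rw [div_sub_div _ _ (ne_of_gt h1) (ne_of_gt h0)]
      have hA : (1*(n:ℝ) - ((n:ℝ)-1)*1) = 1 := by ring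
      rw [hA]
      apply one_div_le_one_div_of_le
      · nlinarith
      · nlinarith
    have hcast : ((n:ℝ)+1) - 1 = (n:ℝ) := by ring
    push_cast
    rw [hcast]
    linarith

theorem stmt_6 (a : ℕ → ℝ) (C₁ p : ℝ)
    (ha : ∀ k : ℕ, 2 ≤ k → 0 < a k)
    (hC : 0 ≤ C₁) (hp0 : 0 < p) (hp1 : p < 1 / 3)
    (h : ∀ k : ℕ, 2 ≤ k →
      ((k : ℝ) ^ 2 / 4) * a k ≤ C₁ + (p / (1 - p)) * ∑ t ∈ Finset.Ico 2 k, a t) :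
    ∀ k : ℕ, 2 ≤ k → a k ≤ (4 * C₁ / (1 - 3 * p)) * (1 / (k : ℝ) ^ 2) := by
  have h3p : 0 < 1 - 3*p := by linarith
  have hq : 0 < 1 - p := by linarith
  set D := 4 * C₁ / (1 - 3 * p) with hD
  have hDnn : 0 ≤ D := div_nonneg (by linarith) h3p.le
  have hDC : (1 - 3*p) * D = 4 * C₁ := by
    rw [hD]; field_simp
  have ha2 : a 2 ≤ C₁ := by
    have h2 := h 2 le_rfl
    simp only [Finset.Ico_self, Finset.sum_empty, mul_zero, add_zero] at h2
    norm_num at h2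
    exact h2
  have hC1D : C₁ ≤ D / 4 := by nlinarith
  intro k
  induction k using Nat.strong_induction_on with
  | _ k IH =>
    intro hk
    rcases eq_or_lt_of_le hk with hk2 | hk3
    · -- k = 2
      rw [← hk2]
      have : D * (1 / ((2:ℕ):ℝ)^2) = D / 4 := by norm_num; ring
      rw [this]
      exact le_trans ha2 hC1D
    · -- 3 ≤ k
      have hk3' : 3 ≤ k := hk3
      have hsum : ∑ t ∈ Finset.Ico 2 k, a t ≤ C₁ + D / 2 := by
        rw [Finset.sum_eq_sum_Ico_succ_bot (by omega : 2 < k)]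
        have hbound : ∑ t ∈ Finset.Ico 3 k, a t ≤
            ∑ t ∈ Finset.Ico 3 k, D * ((1:ℝ)/(t:ℝ)^2) := by
          apply Finset.sum_le_sum
          intro t ht
          rw [Finset.mem_Ico] at ht
          exact IH t ht.2 (by omega)
        have heq : ∑ t ∈ Finset.Ico 3 k, D * ((1:ℝ)/(t:ℝ)^2)
            = D * ∑ t ∈ Finset.Ico 3 k, (1:ℝ)/(t:ℝ)^2 := by
          rw [Finset.mul_sum]
        have hts := aux_sum_6 k hk3'
        have hkpos : (0:ℝ) < (k:ℝ) - 1 := by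
          have : (3:ℝ) ≤ (k:ℝ) := by exact_mod_cast hk3'
          linarith
        have h12 : ∑ t ∈ Finset.Ico 3 k, (1:ℝ)/(t:ℝ)^2 ≤ 1/2 := by
          have : (0:ℝ) < 1/((k:ℝ)-1) := by positivity
          linarith
        have : D * ∑ t ∈ Finset.Ico 3 k, (1:ℝ)/(t:ℝ)^2 ≤ D * (1/2) :=
          mul_le_mul_of_nonneg_left h12 hDnn
        have hD2 : ∑ t ∈ Finset.Ico 3 k, a t ≤ D / 2 := by
          rw [heq] at hbound
          linarith
        linarith
      have hpq : 0 ≤ p / (1 - p) := div_nonneg hp0.le hq.le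
      have hkey : ((k:ℝ)^2 / 4) * a k ≤ D / 4 := by
        have h1 := h k hk
        have h2 : C₁ + (p / (1 - p)) * ∑ t ∈ Finset.Ico 2 k, a t
            ≤ C₁ + (p / (1 - p)) * (C₁ + D / 2) :=
          add_le_add_right (mul_le_mul_of_nonneg_left hsum hpq) C₁
        have h3 : C₁ + (p / (1 - p)) * (C₁ + D / 2) ≤ D / 4 := by
          rw [div_mul_eq_mul_div, ← sub_nonneg]
          have hexp : D / 4 - (C₁ + p * (C₁ + D / 2) / (1 - p))
              = ((1-p) * (D/4) - ((1-p)*C₁ + p * (C₁ + D/2))) / (1 - p) := by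
            field_simp
          rw [hexp]
          apply div_nonneg _ hq.le
          nlinarith
        linarith
      have hkR : (3:ℝ) ≤ (k:ℝ) := by exact_mod_cast hk3'
      have hk2pos : (0:ℝ) < (k:ℝ)^2 := by nlinarith
      calc a k = (4 / (k:ℝ)^2) * (((k:ℝ)^2 / 4) * a k) := by
            field_simp
        _ ≤ (4 / (k:ℝ)^2) * (D / 4) :=
            mul_le_mul_of_nonneg_left hkey (by positivity)
        _ = D * (1 / (k:ℝ)^2) := by
            field_simp
end

section
/- Let k ≥ 1 and q be real numbers, and let x₀, x₂, x₃, x₄, y₁, y₂, y₃, y₄, u₂, u₄ be vectors in ℝⁿ satisfying x₃ = x₂ - y₁ - u₂ + (1/(k+1))(x₀ - x₂) and x₄ = x₂ - y₃ - u₄ + (1/(k+1))(x₀ - x₂). Then (k(k+1)/2)(‖y₂+u₂‖² + ‖y₂-y₁‖²) + k⟨y₂+u₂, x₂-x₀⟩ - ((k+1)(k+2)/2)(‖y₄+u₄‖² + ‖y₄-y₃‖²) - (k+1)⟨y₄+u₄, x₄-x₀⟩ - k(k+1)⟨y₄+u₄-y₂-u₂, x₄-x₂⟩ - (k(k+1)/(4q))(q‖x₄-x₃‖²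 - ‖y₄-y₃‖²) = (k(k+1)/4)‖u₄-u₂+y₁-2y₂+y₃‖² + (((1-4q)k-4q)/(4q))(k+1)‖y₃-y₄‖² + (k+1)⟨y₃-y₄, y₄+u₄⟩. -/
/-!
Put `a = y₄ + u₄`, `b = y₂ + u₂`, `e = y₄ - y₃`, and write the anchor as `x₀ = x₂ + (k + 1) d`.
Every difference of the `xᵢ` is then a combination of `a, b, e, y₁ - y₂` and `d`, and the three
inner products against `d` cancel. The `1/q` terms cancel as well, and the parallelogram law for
`b - a + e ± (y₁ - y₂)` removes `y₁ - y₂`, leaving a quadratic identity in `a, b, e` alone.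
-/

open scoped RealInnerProductSpace

section

variable {E : Type*} [NormedAddCommGroup E] [InnerProductSpace ℝ E]

lemma three_vector_identity (k : ℝ) (a b e : E) :
    ((k + 1) * (k + 2) / 2) * (‖a‖ ^ 2 + ‖e‖ ^ 2) + (k + 1) * ⟪a, e - a⟫
      + k * (k + 1) * ⟪a - b, e - a⟫ + (k * (k + 1) / 2) * ‖b - a + e‖ ^ 2
    = (k * (k + 1) / 2) * ‖b‖ ^ 2 + (k + 1) ^ 2 * ‖e‖ ^ 2 + (k + 1) * ⟪e, a⟫ := by
  rw [norm_add_sq_real, norm_sub_sq_real]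
  simp only [inner_sub_left, inner_sub_right, real_inner_self_eq_norm_sq, real_inner_comm a b,
    real_inner_comm a e]
  ring

theorem anchored_step_identity {k q : ℝ} (hk : k + 1 ≠ 0) (hq : q ≠ 0)
    {x₀ x₂ x₃ x₄ y₁ y₂ y₃ y₄ u₂ u₄ : E}
    (h3 : x₃ = x₂ - y₁ - u₂ + (1 / (k + 1)) • (x₀ - x₂))
    (h4 : x₄ = x₂ - y₃ - u₄ + (1 / (k + 1)) • (x₀ - x₂)) :
    (k * (k + 1) / 2) * (‖y₂ + u₂‖ ^ 2 + ‖y₂ - y₁‖ ^ 2)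
      + k * ⟪y₂ + u₂, x₂ - x₀⟫
      - ((k + 1) * (k + 2) / 2) * (‖y₄ + u₄‖ ^ 2 + ‖y₄ - y₃‖ ^ 2)
      - (k + 1) * ⟪y₄ + u₄, x₄ - x₀⟫
      - k * (k + 1) * ⟪y₄ + u₄ - y₂ - u₂, x₄ - x₂⟫
      - (k * (k + 1) / (4 * q)) * (q * ‖x₄ - x₃‖ ^ 2 - ‖y₄ - y₃‖ ^ 2)
    = (k * (k + 1) / 4) * ‖u₄ - u₂ + y₁ - (2 : ℝ) • y₂ + y₃‖ ^ 2
      + (((1 - 4 * q) * k - 4 * q) / (4 * q)) * (k + 1) * ‖y₃ - y₄‖ ^ 2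
      + (k + 1) * ⟪y₃ - y₄, y₄ + u₄⟫ := by
  set d := (1 / (k + 1)) • (x₀ - x₂) with hd
  have hx₀ : x₀ = x₂ + (k + 1) • d := by
    rw [hd, smul_smul, mul_one_div_cancel hk, one_smul, add_sub_cancel]
  clear_value d
  clear hd
  subst hx₀ h3 h4
  set a := y₄ + u₄
  set b := y₂ + u₂
  set e := y₄ - y₃
  have h20 : x₂ - (x₂ + (k + 1) • d) = (-(k + 1)) • d := by module
  have h40 : x₂ - y₃ - u₄ + d - (x₂ + (k + 1) • d) = (e - a) - k • d := by module
  have h42 : x₂ - y₃ - u₄ + d - x₂ = (e - a) + d := by module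
  have h43 : x₂ - y₃ - u₄ + d - (x₂ - y₁ - u₂ + d) = (b - a + e) + (y₁ - y₂) := by module
  have hv : u₄ - u₂ + y₁ - (2 : ℝ) • y₂ + y₃ = -((b - a + e) - (y₁ - y₂)) := by module
  have hab : y₄ + u₄ - y₂ - u₂ = a - b := by module
  have he : y₃ - y₄ = -e := by module
  rw [h20, h40, h42, h43, hv, hab, he, norm_neg, norm_neg, inner_neg_left, norm_sub_rev y₂ y₁]
  have anchor_cancels :
      k * ⟪b, (-(k + 1)) • d⟫ - (k + 1) * ⟪a, e - a - k • d⟫ - k * (k + 1) * ⟪a - b, e - a + d⟫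
        = -(k + 1) * ⟪a, e - a⟫ - k * (k + 1) * ⟪a - b, e - a⟫ := by
    simp only [inner_add_right, inner_sub_right, real_inner_smul_right, inner_sub_left]
    ring
  have parallelogram := parallelogram_law_with_norm ℝ (b - a + e) (y₁ - y₂)
  have hq_split : (k * (k + 1) / (4 * q)) * (q * ‖b - a + e + (y₁ - y₂)‖ ^ 2 - ‖e‖ ^ 2)
      = (k * (k + 1) / 4) * ‖b - a + e + (y₁ - y₂)‖ ^ 2 - (k * (k + 1) / (4 * q)) * ‖e‖ ^ 2 := by
    field_simp
  have hcoef : ((1 - 4 * q) * k - 4 * q) / (4 * q) * (k + 1)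
      = k * (k + 1) / (4 * q) - (k + 1) ^ 2 := by
    field_simp
    ring
  rw [hq_split, hcoef]
  linear_combination
    anchor_cancels - (k * (k + 1) / 4) * parallelogram - three_vector_identity k a b e

end

theorem stmt_8_general (n : ℕ) (k q : ℝ) (hk : 1 ≤ k) (hq0 : 0 < q)
    (x₀ x₂ x₃ x₄ y₁ y₂ y₃ y₄ u₂ u₄ : EuclideanSpace ℝ (Fin n))
    (h3 : x₃ = x₂ - y₁ - u₂ + (1 / (k + 1)) • (x₀ - x₂))
    (h4 : x₄ = x₂ - y₃ - u₄ + (1 / (k + 1)) • (x₀ - x₂)) :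
    (k * (k + 1) / 2) * (‖y₂ + u₂‖ ^ 2 + ‖y₂ - y₁‖ ^ 2)
      + k * ⟪y₂ + u₂, x₂ - x₀⟫
      - ((k + 1) * (k + 2) / 2) * (‖y₄ + u₄‖ ^ 2 + ‖y₄ - y₃‖ ^ 2)
      - (k + 1) * ⟪y₄ + u₄, x₄ - x₀⟫
      - k * (k + 1) * ⟪y₄ + u₄ - y₂ - u₂, x₄ - x₂⟫
      - (k * (k + 1) / (4 * q)) * (q * ‖x₄ - x₃‖ ^ 2 - ‖y₄ - y₃‖ ^ 2)
    = (k * (k + 1) / 4) * ‖u₄ - u₂ + y₁ - (2 : ℝ) • y₂ + y₃‖ ^ 2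
      + (((1 - 4 * q) * k - 4 * q) / (4 * q)) * (k + 1) * ‖y₃ - y₄‖ ^ 2
      + (k + 1) * ⟪y₃ - y₄, y₄ + u₄⟫ :=
  anchored_step_identity (by linarith) hq0.ne' h3 h4

theorem stmt_8 (n : ℕ) (k q : ℝ) (hk : 1 ≤ k) (hq0 : 0 < q) (hq1 : q < 1)
    (x₀ x₂ x₃ x₄ y₁ y₂ y₃ y₄ u₂ u₄ : EuclideanSpace ℝ (Fin n))
    (h3 : x₃ = x₂ - y₁ - u₂ + (1 / (k + 1)) • (x₀ - x₂))
    (h4 : x₄ = x₂ - y₃ - u₄ + (1 / (k + 1)) • (x₀ - x₂)) :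
    (k * (k + 1) / 2) * (‖y₂ + u₂‖ ^ 2 + ‖y₂ - y₁‖ ^ 2)
      + k * ⟪y₂ + u₂, x₂ - x₀⟫
      - ((k + 1) * (k + 2) / 2) * (‖y₄ + u₄‖ ^ 2 + ‖y₄ - y₃‖ ^ 2)
      - (k + 1) * ⟪y₄ + u₄, x₄ - x₀⟫
      - k * (k + 1) * ⟪y₄ + u₄ - y₂ - u₂, x₄ - x₂⟫
      - (k * (k + 1) / (4 * q)) * (q * ‖x₄ - x₃‖ ^ 2 - ‖y₄ - y₃‖ ^ 2)
    = (k * (k + 1) / 4) * ‖u₄ - u₂ + y₁ - (2 : ℝ) • y₂ + y₃‖ ^ 2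
      + (((1 - 4 * q) * k - 4 * q) / (4 * q)) * (k + 1) * ‖y₃ - y₄‖ ^ 2
      + (k + 1) * ⟪y₃ - y₄, y₄ + u₄⟫ :=
  stmt_8_general n k q hk hq0 x₀ x₂ x₃ x₄ y₁ y₂ y₃ y₄ u₂ u₄ h3 h4
end

section
/- With F L-Lipschitz, η ∈ (0, 1/(2L)), z₁ = J_{ηA}(z₀ - ηF(z₀)), and ηc₁ = z₀ - ηF(z₀) - z₁, define V₁ = ‖ηF(z₁)+ηc₁‖² + ‖ηF(z₁)-ηF(z₀)‖² + ⟨ηF(z₁)+ηc₁, z₁-z₀⟩. Then V₁ ≤ 4‖z₁ - z₀‖². -/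
/-! With `w = ηF(z₁) - ηF(z₀)` and `d = z₁ - z₀` we have `ηF(z₁) + ηc₁ = w - d`, so the quantity
equals `2‖w‖² - ⟪w, d⟫`. Lipschitz continuity and `ηL ≤ 1/2` give `‖w‖ ≤ ‖d‖/2`, and Cauchy–Schwarz
then bounds it by `‖d‖²`. -/

open scoped RealInnerProductSpace

section

variable {E : Type*} [NormedAddCommGroup E] [InnerProductSpace ℝ E]

theorem norm_sub_sq_add_norm_sq_add_inner_sub_self (w d : E) :
    ‖w - d‖ ^ 2 + ‖w‖ ^ 2 + ⟪w - d, d⟫ = 2 * ‖w‖ ^ 2 - ⟪w, d⟫ := by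
  rw [norm_sub_sq_real, inner_sub_left, real_inner_self_eq_norm_sq]
  ring

theorem norm_sub_sq_add_norm_sq_add_inner_sub_self_le {w d : E} (h : ‖w‖ ≤ ‖d‖ / 2) :
    ‖w - d‖ ^ 2 + ‖w‖ ^ 2 + ⟪w - d, d⟫ ≤ ‖d‖ ^ 2 := by
  rw [norm_sub_sq_add_norm_sq_add_inner_sub_self]
  have hcs : -⟪w, d⟫ ≤ ‖w‖ * ‖d‖ := neg_le.mp (abs_le.mp (abs_real_inner_le_norm w d)).1
  nlinarith [norm_nonneg w, norm_nonneg d]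

end

theorem norm_smul_sub_smul_le_half {E G : Type*} [SeminormedAddCommGroup E]
    [SeminormedAddCommGroup G] [NormedSpace ℝ G] {F : E → G} {L η : ℝ}
    (hF : ∀ a b, ‖F a - F b‖ ≤ L * ‖a - b‖) (hη : 0 ≤ η) (hηL : η * L ≤ 1 / 2) (x y : E) :
    ‖η • F x - η • F y‖ ≤ ‖x - y‖ / 2 :=
  calc ‖η • F x - η • F y‖ = η * ‖F x - F y‖ := by
        rw [← smul_sub, norm_smul, Real.norm_of_nonneg hη]
    _ ≤ η * (L * ‖x - y‖) := mul_le_mul_of_nonneg_left (hF x y) hη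
    _ = (η * L) * ‖x - y‖ := by ring
    _ ≤ 1 / 2 * ‖x - y‖ := mul_le_mul_of_nonneg_right hηL (norm_nonneg _)
    _ = ‖x - y‖ / 2 := by ring

theorem stmt_11 (n : ℕ) (L η : ℝ) (hL : 0 < L) (hη0 : 0 < η) (hη1 : η < 1 / (2 * L))
    (F : EuclideanSpace ℝ (Fin n) → EuclideanSpace ℝ (Fin n))
    (hF : ∀ a b, ‖F a - F b‖ ≤ L * ‖a - b‖)
    (z₀ z₁ c₁ : EuclideanSpace ℝ (Fin n))
    (hc₁ : η • c₁ = z₀ - η • F z₀ - z₁) :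
    ‖η • F z₁ + η • c₁‖ ^ 2 + ‖η • F z₁ - η • F z₀‖ ^ 2
      + ⟪η • F z₁ + η • c₁, z₁ - z₀⟫ ≤ 4 * ‖z₁ - z₀‖ ^ 2 := by
  have hηL : η * L ≤ 1 / 2 := by
    rw [lt_div_iff₀ (by positivity)] at hη1
    linarith
  have hsplit : η • F z₁ + η • c₁ = (η • F z₁ - η • F z₀) - (z₁ - z₀) := by
    rw [hc₁]
    abel
  rw [hsplit]
  calc _ ≤ ‖z₁ - z₀‖ ^ 2 := norm_sub_sq_add_norm_sq_add_inner_sub_self_le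
        (norm_smul_sub_smul_le_half hF hη0.le hηL z₁ z₀)
    _ ≤ 4 * ‖z₁ - z₀‖ ^ 2 := by nlinarith [sq_nonneg ‖z₁ - z₀‖]
end

section
/- Consider iterates of the Reflected Gradient (RG) method on a closed convex set Z with monotone L-Lipschitz operator F: z_{t+1/2} = 2z_t - z_{t-1}, z_{t+1} = Π_Z[z_t - ηF(z_{t+1/2})], with c_{t+1} := (z_t - ηF(z_{t+1/2}) - z_{t+1})/η ∈ N_Z(z_{t+1}). Define P_t = ‖F(z_t)+c_t‖² + ‖F(z_t)-F(z_{t-1/2})‖². If 0 < η < 1/((1+√2)L), then P_{t+1} ≤ P_t for all t ≥ 1. -/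
open scoped RealInnerProductSpace

/-!
Write `a = F z_t + c_t`, `b = F z_{t+1} + c_{t+1}`, `p = F z_t - F w_{t-1}`, `q = F z_{t+1} - F w_t`.
The update rules give `z_{t+1} - z_t = -η (b - q)` and `z_{t+1} - w_t = η (a - b - p + q)`.
Monotonicity of `F + N_Z` then says `⟪a - b, b - q⟫ ≥ 0`, and Lipschitzness with `η L ≤ 1/2`
(weaker than `η L < 1/(1 + √2)`) says `2 ‖q‖ ≤ ‖a - b - p + q‖`.
These two facts close the sum-of-squares identity
`2 (‖a‖² + ‖p‖² + ‖q‖²) = 2 ‖b‖² + 4 ⟪a - b, b - q⟫ + ‖a - b + p + q‖² + ‖a - b - p + q‖²`.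
-/

section InnerProductSpace

variable {E : Type*} [NormedAddCommGroup E] [InnerProductSpace ℝ E]

lemma two_mul_norm_sq_add_norm_sq_add_norm_sq (a b p q : E) :
    2 * (‖a‖ ^ 2 + ‖p‖ ^ 2 + ‖q‖ ^ 2) =
      2 * ‖b‖ ^ 2 + 4 * ⟪a - b, b - q⟫ + ‖a - b + p + q‖ ^ 2 + ‖a - b - p + q‖ ^ 2 := by
  simp only [← real_inner_self_eq_norm_sq, inner_add_left, inner_add_right, inner_sub_left,
    inner_sub_right]
  rw [real_inner_comm b a, real_inner_comm p a, real_inner_comm q a, real_inner_comm p b,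
    real_inner_comm q b, real_inner_comm q p]
  ring

lemma norm_sq_add_norm_sq_le_of_inner_nonneg {a b p q : E} (h_inner : 0 ≤ ⟪a - b, b - q⟫)
    (h_norm : 2 * ‖q‖ ≤ ‖a - b - p + q‖) : ‖b‖ ^ 2 + ‖q‖ ^ 2 ≤ ‖a‖ ^ 2 + ‖p‖ ^ 2 := by
  have h_sq : (2 * ‖q‖) ^ 2 ≤ ‖a - b - p + q‖ ^ 2 := pow_le_pow_left₀ (by positivity) h_norm 2
  nlinarith [two_mul_norm_sq_add_norm_sq_add_norm_sq a b p q, sq_nonneg ‖a - b + p + q‖]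

lemma inner_add_sub_add_nonneg_of_normal {Z : Set E} {F : E → E}
    (hF_mono : ∀ a b, 0 ≤ ⟪F a - F b, a - b⟫) {z z' c c' : E} (hz : z ∈ Z) (hz' : z' ∈ Z)
    (hc : ∀ y ∈ Z, ⟪c, y - z⟫ ≤ 0) (hc' : ∀ y ∈ Z, ⟪c', y - z'⟫ ≤ 0) :
    0 ≤ ⟪(F z' + c') - (F z + c), z' - z⟫ := by
  have hcz := hc z' hz'
  have hcz' := hc' z hz
  rw [← neg_sub, inner_neg_right] at hcz'
  have h_split : (F z' + c') - (F z + c) = (F z' - F z) + c' - c := by abel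
  rw [h_split, inner_sub_left, inner_add_left]
  linarith [hF_mono z' z]

lemma reflectedGradient_norm_sq_add_norm_sq_le {Z : Set E} {F : E → E} {L η : ℝ}
    (hη0 : 0 < η) (hηL : 2 * (L * η) ≤ 1)
    (hF_mono : ∀ a b, 0 ≤ ⟪F a - F b, a - b⟫) (hF_lip : ∀ a b, ‖F a - F b‖ ≤ L * ‖a - b‖)
    {zPrev z zNext wPrev w c cNext : E} (hz : z ∈ Z) (hzNext : zNext ∈ Z)
    (hw : w = (2 : ℝ) • z - zPrev)
    (hc : η • c = zPrev - η • F wPrev - z) (hcNext : η • cNext = z - η • F w - zNext)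
    (hc_nc : ∀ y ∈ Z, ⟪c, y - z⟫ ≤ 0) (hcNext_nc : ∀ y ∈ Z, ⟪cNext, y - zNext⟫ ≤ 0) :
    ‖F zNext + cNext‖ ^ 2 + ‖F zNext - F w‖ ^ 2 ≤ ‖F z + c‖ ^ 2 + ‖F z - F wPrev‖ ^ 2 := by
  set a := F z + c
  set b := F zNext + cNext
  set p := F z - F wPrev
  set q := F zNext - F w
  have h_step : zNext - z = -η • (b - q) := by
    rw [show b - q = cNext + F w by simp only [b, q]; abel, smul_add, neg_smul, neg_smul, hcNext]
    abel
  have h_reflect : zNext - w = η • (a - b - p + q) := by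
    have h_extra : w - z = -η • (a - p) := by
      rw [show a - p = c + F wPrev by simp only [a, p]; abel, smul_add, neg_smul, neg_smul, hc,
        hw, two_smul]
      abel
    rw [show zNext - w = (zNext - z) - (w - z) by abel, h_step, h_extra]
    module
  refine norm_sq_add_norm_sq_le_of_inner_nonneg ?_ ?_
  · have h : 0 ≤ ⟪b - a, zNext - z⟫ :=
      inner_add_sub_add_nonneg_of_normal hF_mono hz hzNext hc_nc hcNext_nc
    rw [h_step, real_inner_smul_right, ← neg_sub a b, inner_neg_left, neg_mul_neg] at h
    exact (mul_nonneg_iff_of_pos_left hη0).mp h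
  · calc 2 * ‖q‖ ≤ 2 * (L * ‖zNext - w‖) := by gcongr; exact hF_lip zNext w
      _ = 2 * (L * η) * ‖a - b - p + q‖ := by
        rw [h_reflect, norm_smul, Real.norm_of_nonneg hη0.le]; ring
      _ ≤ ‖a - b - p + q‖ := mul_le_of_le_one_left (norm_nonneg _) hηL

end InnerProductSpace

theorem stmt_14_general (n : ℕ) (Z : Set (EuclideanSpace ℝ (Fin n)))
    (F : EuclideanSpace ℝ (Fin n) → EuclideanSpace ℝ (Fin n))
    (L η : ℝ) (hη0 : 0 < η) (hη1 : η < 1 / ((1 + Real.sqrt 2) * L))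
    (hF_mono : ∀ a b, 0 ≤ ⟪F a - F b, a - b⟫)
    (hF_lip : ∀ a b, ‖F a - F b‖ ≤ L * ‖a - b‖)
    (z w c : ℤ → EuclideanSpace ℝ (Fin n))
    (hz_mem : ∀ t : ℤ, 0 ≤ t → z t ∈ Z)
    (hw : ∀ t : ℤ, 0 ≤ t → w t = (2 : ℝ) • z t - z (t - 1))
    (hc : ∀ t : ℤ, 0 ≤ t → η • c (t + 1) = z t - η • F (w t) - z (t + 1))
    (hc_nc : ∀ t : ℤ, 1 ≤ t → ∀ z' ∈ Z, ⟪c t, z' - z t⟫ ≤ 0) :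
    ∀ t : ℤ, 1 ≤ t →
      ‖F (z (t + 1)) + c (t + 1)‖ ^ 2 + ‖F (z (t + 1)) - F (w t)‖ ^ 2 ≤
        ‖F (z t) + c t‖ ^ 2 + ‖F (z t) - F (w (t - 1))‖ ^ 2 := by
  intro t ht
  have hηL : 2 * (L * η) ≤ 1 := by
    have h_pos : 0 < (1 + Real.sqrt 2) * L := one_div_pos.mp (hη0.trans hη1)
    have h_two : 2 ≤ 1 + Real.sqrt 2 := by linarith [Real.one_le_sqrt.mpr one_le_two]
    have h_lt := (lt_div_iff₀ h_pos).mp hη1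
    nlinarith
  have hc_prev := hc (t - 1) (by omega)
  rw [sub_add_cancel] at hc_prev
  exact reflectedGradient_norm_sq_add_norm_sq_le hη0 hηL hF_mono hF_lip
    (hz_mem t (by omega)) (hz_mem (t + 1) (by omega)) (hw t (by omega)) hc_prev
    (hc t (by omega)) (hc_nc t ht) (hc_nc (t + 1) (by omega))

theorem stmt_14 (n : ℕ) (Z : Set (EuclideanSpace ℝ (Fin n)))
    (hZ_closed : IsClosed Z) (hZ_convex : Convex ℝ Z)
    (F : EuclideanSpace ℝ (Fin n) → EuclideanSpace ℝ (Fin n))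
    (L η : ℝ) (hL : 0 < L) (hη0 : 0 < η) (hη1 : η < 1 / ((1 + Real.sqrt 2) * L))
    (hF_mono : ∀ a b, 0 ≤ ⟪F a - F b, a - b⟫)
    (hF_lip : ∀ a b, ‖F a - F b‖ ≤ L * ‖a - b‖)
    (z w c : ℤ → EuclideanSpace ℝ (Fin n))
    (hz_init : z (-1) = z 0)
    (hz_mem : ∀ t : ℤ, 0 ≤ t → z t ∈ Z)
    (hw : ∀ t : ℤ, 0 ≤ t → w t = (2 : ℝ) • z t - z (t - 1))
    (hc : ∀ t : ℤ, 0 ≤ t → η • c (t + 1) = z t - η • F (w t) - z (t + 1))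
    (hc_nc : ∀ t : ℤ, 1 ≤ t → ∀ z' ∈ Z, ⟪c t, z' - z t⟫ ≤ 0) :
    ∀ t : ℤ, 1 ≤ t →
      ‖F (z (t + 1)) + c (t + 1)‖ ^ 2 + ‖F (z (t + 1)) - F (w t)‖ ^ 2 ≤
        ‖F (z t) + c t‖ ^ 2 + ‖F (z t) - F (w (t - 1))‖ ^ 2 :=
  stmt_14_general n Z F L η hη0 hη1 hF_mono hF_lip z w c hz_mem hw hc hc_nc
end

section
/- Let F + A be ρ-comonotone (⟨u - u', z - z'⟩ ≥ ρ‖u - u'‖² for all (z,u),(z',u') in the graph of F+A) with 0 ∈ F(z*)+A(z*) and ρ/η ≥ -1/4 for some η > 0. Then for any z with u ∈ F(z)+A(z), writing w = ηu: ⟨w, z - z*⟩ ≥ -(1/4)‖w‖², and consequently for any t ≥ 1 and any z₀: (t(t+1)/2)‖w‖² + t⟨w, z - z₀⟩ ≥ (t(t+1/2)/4)‖w‖² - ‖z* - z₀‖². -/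
/-! The comonotonicity inequality between `(z, u)` and the zero `(z⋆, 0)` gives
`⟪u, z - z⋆⟫ ≥ ρ ‖u‖²`; scaling by `η` and using `ρ / η ≥ -1/4` yields the first claim.
For the second, split `z - z₀ = (z - z⋆) + (z⋆ - z₀)` and bound the cross term by Young's
inequality `t ⟪w, e⟫ ≥ -(t²/4) ‖w‖² - ‖e‖²`, i.e. `‖(t/2) w + e‖² ≥ 0`. -/

open scoped RealInnerProductSpace

variable {E : Type*} [NormedAddCommGroup E] [InnerProductSpace ℝ E]

def IsComonotone (ρ : ℝ) (T : E → Set E) : Prop :=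
  ∀ z z' u u', u ∈ T z → u' ∈ T z' → ρ * ‖u - u'‖ ^ 2 ≤ ⟪u - u', z - z'⟫

theorem IsComonotone.mul_norm_sq_le_inner_sub_zero {ρ : ℝ} {T : E → Set E}
    (hT : IsComonotone ρ T) {z zstar u : E} (hu : u ∈ T z) (hzstar : 0 ∈ T zstar) :
    ρ * ‖u‖ ^ 2 ≤ ⟪u, z - zstar⟫ := by
  simpa using hT z zstar u 0 hu hzstar

theorem neg_quarter_norm_sq_le_inner_smul {ρ η : ℝ} (hη : 0 < η) (hρη : -1 / 4 ≤ ρ / η)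
    {u v : E} (h : ρ * ‖u‖ ^ 2 ≤ ⟪u, v⟫) :
    -(1 / 4) * ‖η • u‖ ^ 2 ≤ ⟪η • u, v⟫ := by
  have hρ : -(1 / 4) * η ≤ ρ := by
    have := (le_div_iff₀ hη).mp hρη
    linarith
  rw [norm_smul, real_inner_smul_left, Real.norm_of_nonneg hη.le]
  calc -(1 / 4) * (η * ‖u‖) ^ 2 = η * (-(1 / 4) * η * ‖u‖ ^ 2) := by ring
    _ ≤ η * (ρ * ‖u‖ ^ 2) := by gcongr
    _ ≤ η * ⟪u, v⟫ := by gcongr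

theorem neg_le_mul_inner (t : ℝ) (w e : E) :
    -(t ^ 2 / 4 * ‖w‖ ^ 2) - ‖e‖ ^ 2 ≤ t * ⟪w, e⟫ := by
  have h := norm_add_sq_real ((t / 2) • w) e
  rw [norm_smul, real_inner_smul_left, Real.norm_eq_abs, mul_pow, sq_abs] at h
  nlinarith [sq_nonneg ‖(t / 2) • w + e‖]

theorem le_add_mul_inner_add_of_neg_quarter_le_inner {t : ℝ} (ht : 0 ≤ t) {w d e : E}
    (hd : -(1 / 4) * ‖w‖ ^ 2 ≤ ⟪w, d⟫) :
    (t * (t + 1 / 2) / 4) * ‖w‖ ^ 2 - ‖e‖ ^ 2 ≤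
      (t * (t + 1) / 2) * ‖w‖ ^ 2 + t * ⟪w, d + e⟫ := by
  have hyoung := neg_le_mul_inner t w e
  rw [inner_add_right, mul_add]
  nlinarith [mul_le_mul_of_nonneg_left hd ht, mul_nonneg ht (sq_nonneg ‖w‖)]

theorem stmt_19_general (n : ℕ)
    (F : EuclideanSpace ℝ (Fin n) → EuclideanSpace ℝ (Fin n))
    (A : EuclideanSpace ℝ (Fin n) → Set (EuclideanSpace ℝ (Fin n)))
    (ρ η : ℝ) (hη : 0 < η) (hρη : ρ / η ≥ -1 / 4)
    (hcomono : ∀ z z' u u' : EuclideanSpace ℝ (Fin n),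
      u - F z ∈ A z → u' - F z' ∈ A z' →
        ⟪u - u', z - z'⟫ ≥ ρ * ‖u - u'‖ ^ 2)
    (zstar : EuclideanSpace ℝ (Fin n)) (hzstar : -F zstar ∈ A zstar) :
    ∀ z u : EuclideanSpace ℝ (Fin n), u - F z ∈ A z →
      (⟪η • u, z - zstar⟫ ≥ -(1 / 4) * ‖η • u‖ ^ 2) ∧
      (∀ t : ℝ, 1 ≤ t → ∀ z₀ : EuclideanSpace ℝ (Fin n),
        (t * (t + 1) / 2) * ‖η • u‖ ^ 2 + t * ⟪η • u, z - z₀⟫ ≥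
          (t * (t + 1 / 2) / 4) * ‖η • u‖ ^ 2 - ‖zstar - z₀‖ ^ 2) := by
  intro z u hu
  have hE : IsComonotone ρ (fun z => {u | u - F z ∈ A z}) :=
    fun z z' u u' hu hu' => hcomono z z' u u' hu hu'
  have hzero : (0 : EuclideanSpace ℝ (Fin n)) ∈ {u | u - F zstar ∈ A zstar} := by
    simpa using hzstar
  have key := neg_quarter_norm_sq_le_inner_smul hη hρη
    (hE.mul_norm_sq_le_inner_sub_zero hu hzero)
  refine ⟨key, fun t ht z₀ => ?_⟩
  rw [← sub_add_sub_cancel z zstar z₀]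
  exact le_add_mul_inner_add_of_neg_quarter_le_inner (zero_le_one.trans ht) key

theorem stmt_19 (n : ℕ)
    (F : EuclideanSpace ℝ (Fin n) → EuclideanSpace ℝ (Fin n))
    (A : EuclideanSpace ℝ (Fin n) → Set (EuclideanSpace ℝ (Fin n)))
    (ρ η : ℝ) (hρ : ρ ≤ 0) (hη : 0 < η) (hρη : ρ / η ≥ -1 / 4)
    (hcomono : ∀ z z' u u' : EuclideanSpace ℝ (Fin n),
      u - F z ∈ A z → u' - F z' ∈ A z' →
        ⟪u - u', z - z'⟫ ≥ ρ * ‖u - u'‖ ^ 2)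
    (zstar : EuclideanSpace ℝ (Fin n)) (hzstar : -F zstar ∈ A zstar) :
    ∀ z u : EuclideanSpace ℝ (Fin n), u - F z ∈ A z →
      (⟪η • u, z - zstar⟫ ≥ -(1 / 4) * ‖η • u‖ ^ 2) ∧
      (∀ t : ℝ, 1 ≤ t → ∀ z₀ : EuclideanSpace ℝ (Fin n),
        (t * (t + 1) / 2) * ‖η • u‖ ^ 2 + t * ⟪η • u, z - z₀⟫ ≥
          (t * (t + 1 / 2) / 4) * ‖η • u‖ ^ 2 - ‖zstar - z₀‖ ^ 2) :=
  stmt_19_general n F A ρ η hη hρη hcomono zstar hzstar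
end
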